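/- arXiv:2005.14492 — 2 statements merged into one kernel-verified Lean document; each statement's English description precedes it below -/
import Mathlib

section
/- A prehomomorphism θ : S → T between inverse semigroups is a semigroup homomorphism if and only if θ(ef) = θ(e)θ(f) for all idempotents e, f of S. -/
/-!
A prehomomorphism sends idempotents to idempotents and inverses to inverses, and it preserves
domains: `θ (a⁻¹ * a) = (θ a)⁻¹ * θ a`, and dually ranges. Since `θ (s * t) ≤ θ s * θ t`, and two
comparable elements with the same domain are equal, it suffices to compare domains. The domain of
`s * t` is that of `(s⁻¹ * s) * t`, which reduces the claim to products `e * t` with `e`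
idempotent; for these one compares ranges instead, and the range of `e * t` is the product of
the idempotents `e` and `t * t⁻¹`, which `θ` preserves by hypothesis.
-/

/-- An inverse semigroup: a semigroup with an involution-like inverse such that
`a * a⁻¹ * a = a`, `a⁻¹ * a * a⁻¹ = a⁻¹`, and idempotents commute. -/
class InverseSemigroup (S : Type*) extends Semigroup S, Inv S where
  mul_inv_mul : ∀ a : S, a * a⁻¹ * a = a
  inv_mul_inv : ∀ a : S, a⁻¹ * a * a⁻¹ = a⁻¹
  idem_comm : ∀ e f : S, e * e = e → f * f = f → e * f = f * e

/-- The natural partial order on an inverse semigroup: `a ≤ b` iff `a = b * e`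
for some idempotent `e`. -/
def natLe {S : Type*} [InverseSemigroup S] (a b : S) : Prop :=
  ∃ e : S, e * e = e ∧ a = b * e

/-- A prehomomorphism between inverse semigroups. -/
def IsPrehom {S T : Type*} [InverseSemigroup S] [InverseSemigroup T] (θ : S → T) : Prop :=
  ∀ s t : S, natLe (θ (s * t)) (θ s * θ t)

namespace InverseSemigroup

variable {S : Type*} [InverseSemigroup S] {a e f x : S}

/-- Lawson's `d(a)`. -/
def dom (a : S) : S := a⁻¹ * a

/-- Lawson's `r(a)`. -/
def ran (a : S) : S := a * a⁻¹

theorem isIdempotentElem_dom (a : S) : IsIdempotentElem (dom a) := by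
  rw [IsIdempotentElem, dom, mul_assoc, ← mul_assoc a, mul_inv_mul]

theorem isIdempotentElem_ran (a : S) : IsIdempotentElem (ran a) := by
  rw [IsIdempotentElem, ran, mul_assoc, ← mul_assoc a⁻¹, inv_mul_inv]

theorem commute_of_isIdempotentElem (he : IsIdempotentElem e) (hf : IsIdempotentElem f) :
    Commute e f :=
  idem_comm e f he hf

theorem inv_eq_of_mul_mul_eq (h₁ : a * x * a = a) (h₂ : x * a * x = x) : a⁻¹ = x := by
  have hax : IsIdempotentElem (a * x) := by rw [IsIdempotentElem, ← mul_assoc, h₁]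
  have hxa : IsIdempotentElem (x * a) := by rw [IsIdempotentElem, ← mul_assoc, h₂]
  calc a⁻¹ = a⁻¹ * (a * x * a) * a⁻¹ := by rw [h₁, inv_mul_inv]
    _ = dom a * (x * a) * a⁻¹ := by simp only [dom, mul_assoc]
    _ = (x * a) * dom a * a⁻¹ := by
      rw [(commute_of_isIdempotentElem (isIdempotentElem_dom a) hxa).eq]
    _ = x * (a * a⁻¹ * a) * a⁻¹ := by simp only [dom, mul_assoc]
    _ = x * a * x * ran a := by rw [mul_inv_mul, h₂, ran, mul_assoc]
    _ = x * ((a * x) * ran a) := by simp only [mul_assoc]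
    _ = x * (ran a * (a * x)) := by
      rw [(commute_of_isIdempotentElem hax (isIdempotentElem_ran a)).eq]
    _ = x * (a * a⁻¹ * a) * x := by simp only [ran, mul_assoc]
    _ = x := by rw [mul_inv_mul, h₂]

theorem inv_inv (a : S) : a⁻¹⁻¹ = a :=
  inv_eq_of_mul_mul_eq (inv_mul_inv a) (mul_inv_mul a)

theorem inv_eq_self_of_isIdempotentElem (he : IsIdempotentElem e) : e⁻¹ = e :=
  inv_eq_of_mul_mul_eq (by rw [he.eq, he.eq]) (by rw [he.eq, he.eq])

theorem mul_inv_rev (a b : S) : (a * b)⁻¹ = b⁻¹ * a⁻¹ := by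
  have hcomm := (commute_of_isIdempotentElem (isIdempotentElem_ran b)
    (isIdempotentElem_dom a)).eq
  refine inv_eq_of_mul_mul_eq ?_ ?_
  · calc a * b * (b⁻¹ * a⁻¹) * (a * b) = a * (ran b * dom a) * b := by
          simp only [ran, dom, mul_assoc]
      _ = (a * a⁻¹ * a) * (b * b⁻¹ * b) := by rw [hcomm]; simp only [ran, dom, mul_assoc]
      _ = a * b := by rw [mul_inv_mul, mul_inv_mul]
  · calc b⁻¹ * a⁻¹ * (a * b) * (b⁻¹ * a⁻¹) = b⁻¹ * (dom a * ran b) * a⁻¹ := by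
          simp only [ran, dom, mul_assoc]
      _ = (b⁻¹ * b * b⁻¹) * (a⁻¹ * a * a⁻¹) := by rw [← hcomm]; simp only [ran, dom, mul_assoc]
      _ = b⁻¹ * a⁻¹ := by rw [inv_mul_inv, inv_mul_inv]

theorem dom_inv (a : S) : dom a⁻¹ = ran a := by
  rw [dom, ran, inv_inv]

theorem dom_mul (a b : S) : dom (a * b) = dom (dom a * b) := by
  have he := isIdempotentElem_dom a
  rw [dom, dom, mul_inv_rev, mul_inv_rev (dom a), inv_eq_self_of_isIdempotentElem he]
  calc b⁻¹ * a⁻¹ * (a * b) = b⁻¹ * (dom a * dom a) * b := by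
        rw [he.eq, dom]; simp only [mul_assoc]
    _ = b⁻¹ * dom a * (dom a * b) := by simp only [mul_assoc]

theorem ran_mul_of_isIdempotentElem (he : IsIdempotentElem e) (a : S) :
    ran (e * a) = e * ran a := by
  rw [ran, ran, mul_inv_rev, inv_eq_self_of_isIdempotentElem he]
  calc e * a * (a⁻¹ * e) = e * (ran a * e) := by simp only [ran, mul_assoc]
    _ = e * ran a := by
      rw [← (commute_of_isIdempotentElem he (isIdempotentElem_ran a)).eq, ← mul_assoc, he.eq]

end InverseSemigroup

open InverseSemigroup

namespace natLe

variable {S : Type*} [InverseSemigroup S] {a b c e f y : S}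

theorem trans (h₁ : natLe a b) (h₂ : natLe b c) : natLe a c := by
  obtain ⟨e, he, rfl⟩ := h₁
  obtain ⟨f, hf, rfl⟩ := h₂
  exact ⟨f * e, IsIdempotentElem.mul_of_commute (commute_of_isIdempotentElem hf he) hf he,
    mul_assoc _ _ _⟩

theorem mul_left (h : natLe a b) (c : S) : natLe (c * a) (c * b) := by
  obtain ⟨e, he, rfl⟩ := h
  exact ⟨e, he, (mul_assoc _ _ _).symm⟩

theorem eq_mul_dom (h : natLe a b) : a = b * dom a := by
  obtain ⟨e, he, rfl⟩ := h
  rw [dom, InverseSemigroup.mul_inv_rev, inv_eq_self_of_isIdempotentElem he]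
  symm
  calc b * (e * b⁻¹ * (b * e)) = b * (e * dom b * e) := by simp only [dom, mul_assoc]
    _ = b * (dom b * e * e) := by
      rw [(commute_of_isIdempotentElem he (isIdempotentElem_dom b)).eq]
    _ = b * e := by rw [mul_assoc (dom b), he, dom, ← mul_assoc, ← mul_assoc, mul_inv_mul]

theorem eq_ran_mul (h : natLe a b) : a = ran a * b := by
  obtain ⟨e, he, rfl⟩ := h
  rw [ran, InverseSemigroup.mul_inv_rev, inv_eq_self_of_isIdempotentElem he]
  symm
  calc b * e * (e * b⁻¹) * b = b * (e * e * dom b) := by simp only [dom, mul_assoc]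
    _ = b * (dom b * e) := by
      rw [he, (commute_of_isIdempotentElem he (isIdempotentElem_dom b)).eq]
    _ = b * e := by rw [dom, ← mul_assoc, ← mul_assoc, mul_inv_mul]

theorem eq_of_dom_eq (h : natLe a b) (hd : dom a = dom b) : a = b := by
  rw [h.eq_mul_dom, hd, dom, ← mul_assoc, mul_inv_mul]

theorem eq_of_ran_eq (h : natLe a b) (hr : ran a = ran b) : a = b := by
  rw [h.eq_ran_mul, hr, ran, mul_inv_mul]

theorem mul_right_eq_self (h : natLe a (a * y)) : a * y = a := by
  conv_rhs => rw [h.eq_ran_mul, ran, ← mul_assoc, mul_inv_mul]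

theorem mul_eq_of_isIdempotentElem (h : natLe e f) (hf : IsIdempotentElem f) : f * e = e := by
  obtain ⟨g, -, rfl⟩ := h
  rw [← mul_assoc, hf.eq]

end natLe

namespace IsPrehom

variable {S T : Type*} [InverseSemigroup S] [InverseSemigroup T] {θ : S → T}

theorem isIdempotentElem_map (hθ : IsPrehom θ) {e : S} (he : IsIdempotentElem e) :
    IsIdempotentElem (θ e) := by
  have h := hθ e e
  rw [he.eq] at h
  exact h.mul_right_eq_self

theorem map_mul_map_inv_mul (hθ : IsPrehom θ) (a : S) : θ a * θ a⁻¹ * θ a = θ a := by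
  have h := hθ a (a⁻¹ * a)
  rw [← mul_assoc, mul_inv_mul] at h
  rw [mul_assoc]
  exact (h.trans ((hθ a⁻¹ a).mul_left (θ a))).mul_right_eq_self

theorem map_inv (hθ : IsPrehom θ) (a : S) : θ a⁻¹ = (θ a)⁻¹ := by
  refine (inv_eq_of_mul_mul_eq (hθ.map_mul_map_inv_mul a) ?_).symm
  simpa only [InverseSemigroup.inv_inv] using hθ.map_mul_map_inv_mul a⁻¹

theorem map_dom (hθ : IsPrehom θ) (a : S) : θ (dom a) = dom (θ a) := by
  have hle : natLe (θ (dom a)) (dom (θ a)) := by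
    simpa only [dom, hθ.map_inv] using hθ a⁻¹ a
  have hfix : θ a * θ (dom a) = θ a := by
    have h := hθ a (dom a)
    rw [dom, ← mul_assoc, mul_inv_mul] at h
    exact h.mul_right_eq_self
  calc θ (dom a) = dom (θ a) * θ (dom a) :=
        (hle.mul_eq_of_isIdempotentElem (isIdempotentElem_dom _)).symm
    _ = dom (θ a) := by rw [dom, mul_assoc, hfix]

theorem map_ran (hθ : IsPrehom θ) (a : S) : θ (ran a) = ran (θ a) := by
  simpa only [dom_inv, hθ.map_inv] using hθ.map_dom a⁻¹

variable (hθ : IsPrehom θ)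
  (H : ∀ e f : S, IsIdempotentElem e → IsIdempotentElem f → θ (e * f) = θ e * θ f)
include hθ H

theorem map_idempotent_mul {e : S} (he : IsIdempotentElem e) (t : S) :
    θ (e * t) = θ e * θ t := by
  refine (hθ e t).eq_of_ran_eq ?_
  rw [← hθ.map_ran, ran_mul_of_isIdempotentElem he, H _ _ he (isIdempotentElem_ran t),
    hθ.map_ran, ran_mul_of_isIdempotentElem (hθ.isIdempotentElem_map he)]

theorem map_mul (s t : S) : θ (s * t) = θ s * θ t := by
  refine (hθ s t).eq_of_dom_eq ?_
  rw [← hθ.map_dom, dom_mul, hθ.map_dom, map_idempotent_mul hθ H (isIdempotentElem_dom s),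
    hθ.map_dom, ← dom_mul]

end IsPrehom

theorem stmt6 {S T : Type*} [InverseSemigroup S] [InverseSemigroup T]
    (θ : S → T) (hθ : IsPrehom θ) :
    (∀ s t : S, θ (s * t) = θ s * θ t) ↔
      (∀ e f : S, e * e = e → f * f = f → θ (e * f) = θ e * θ f) :=
  ⟨fun h e f _ _ => h e f, fun H => hθ.map_mul H⟩
end

section
/- In an ordered groupoid G, for x, y ∈ G the pseudoproduct x ⊗ y = (x|e)(e|y) with e = d(x) ∧ r(y) exists if and only if the set ⟨x,y⟩ = {(x',y') : d(x') = r(y'), x' ≤ x, y' ≤ y} has a maximum element (x'',y''), and in that case x ⊗ y = x''y''. -/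
/-!
If `e` is the greatest identity below `d x` and `r y`, then every composable pair
`(x', y') ≤ (x, y)` has `d x' ≤ e`; by uniqueness of restrictions `x' = (x | d x') ≤ (x | e)`
and dually `y' ≤ (e | y)`, so `((x | e), (e | y))` is the maximum of `⟨x, y⟩`. Conversely, if
`(x'', y'')` is the maximum of `⟨x, y⟩`, then `d x''` is the greatest such identity, because for
every identity `f` below `d x` and `r y` the pair `((x | f), (f | y))` lies in `⟨x, y⟩`.
Since maxima are unique, `x ⊗ y = x'' y''`.
-/

/-- An algebraic groupoid: a type with an everywhere-defined multiplication which is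
only required to behave well on composable pairs (`d x = r y`), together with
inversion and domain/range maps (valued in the identities of the groupoid). -/
class Groupoid' (G : Type*) where
  mul : G → G → G
  inv : G → G
  d : G → G
  r : G → G
  r_d : ∀ x : G, r (d x) = d x
  d_r : ∀ x : G, d (r x) = r x
  mul_assoc : ∀ x y z : G, d x = r y → d y = r z → mul (mul x y) z = mul x (mul y z)
  d_mul : ∀ x y : G, d x = r y → d (mul x y) = d y
  r_mul : ∀ x y : G, d x = r y → r (mul x y) = r x
  mul_d : ∀ x : G, mul x (d x) = x
  r_mul_cancel : ∀ x : G, mul (r x) x = x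
  mul_inv : ∀ x : G, mul x (inv x) = r x
  inv_mul : ∀ x : G, mul (inv x) x = d x
  d_inv : ∀ x : G, d (inv x) = r x
  r_inv : ∀ x : G, r (inv x) = d x

open Groupoid'
open scoped Classical

/-- An element is an identity of the groupoid if it is its own domain. -/
def IsId {G : Type*} [Groupoid' G] (e : G) : Prop := d e = e

/-- An ordered groupoid: axioms (OG1), (OG2) and (OG3) (restriction exists uniquely). -/
class OrderedGroupoid (G : Type*) [Groupoid' G] [PartialOrder G] : Prop where
  og1 : ∀ x y : G, x ≤ y → inv x ≤ inv y
  og2 : ∀ x y u v : G, x ≤ y → u ≤ v → d x = r u → d y = r v → mul x u ≤ mul y v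
  og3 : ∀ x e : G, IsId e → e ≤ d x → ∃! z : G, z ≤ x ∧ d z = e


/-- The restriction `(x | e)` of `x` to an identity `e ≤ d x`: the unique element
below `x` with domain `e` (junk value `x` if undefined). -/
noncomputable def res {G : Type*} [Groupoid' G] [PartialOrder G] [OrderedGroupoid G]
    (x e : G) : G :=
  if h : IsId e ∧ e ≤ d x then
    Classical.choose (OrderedGroupoid.og3 x e h.1 h.2).exists
  else x

/-- The corestriction `(e | x)` of `x` to an identity `e ≤ r x`. -/
noncomputable def cores {G : Type*} [Groupoid' G] [PartialOrder G] [OrderedGroupoid G]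
    (e x : G) : G :=
  inv (res (inv x) e)

namespace Groupoid'

variable {G : Type*} [Groupoid' G]

lemma isId_d (x : G) : IsId (d x) := by
  have h := d_mul x (d x) (r_d x).symm
  rw [mul_d] at h
  exact h.symm

lemma inv_inv (x : G) : inv (inv x) = x :=
  calc inv (inv x) = mul (mul x (inv x)) (inv (inv x)) := by
        rw [mul_inv, ← d_inv, ← r_inv, r_mul_cancel]
    _ = mul x (mul (inv x) (inv (inv x))) :=
        mul_assoc _ _ _ (r_inv x).symm (r_inv (inv x)).symm
    _ = x := by rw [mul_inv, r_inv, mul_d]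

end Groupoid'

namespace OrderedGroupoid

open Groupoid'

variable {G : Type*} [Groupoid' G] [PartialOrder G]

/-- The pseudoproduct `x ⊗ y` exists when this set has a greatest element `d x ∧ r y`. -/
def idsBelow (x y : G) : Set G := {f | IsId f ∧ f ≤ d x ∧ f ≤ r y}

/-- The set `⟨x, y⟩`. -/
def composableBelow (x y : G) : Set (G × G) := {q | d q.1 = r q.2 ∧ q.1 ≤ x ∧ q.2 ≤ y}

lemma isGreatest_idsBelow_iff {x y e : G} :
    IsGreatest (idsBelow x y) e ↔
      IsId e ∧ e ≤ d x ∧ e ≤ r y ∧ ∀ f : G, IsId f → f ≤ d x → f ≤ r y → f ≤ e := by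
  simp only [IsGreatest, upperBounds, idsBelow, Set.mem_ofPred_eq, and_imp, and_assoc]

variable [OrderedGroupoid G]

lemma monotone_inv : Monotone (inv : G → G) := og1

lemma monotone_d : Monotone (d : G → G) := fun x y h => by
  simpa only [inv_mul] using og2 _ _ _ _ (og1 _ _ h) h (d_inv x) (d_inv y)

lemma monotone_r : Monotone (r : G → G) := fun x y h => by
  simpa only [Groupoid'.mul_inv] using og2 _ _ _ _ h (og1 _ _ h) (r_inv x).symm (r_inv y).symm

section Restriction

variable {x y e f : G}

lemma res_le_and_d_res (he : IsId e) (hle : e ≤ d x) : res x e ≤ x ∧ d (res x e) = e := by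
  rw [res, dif_pos ⟨he, hle⟩]
  exact Classical.choose_spec (og3 x e he hle).exists

lemma res_le (he : IsId e) (hle : e ≤ d x) : res x e ≤ x := (res_le_and_d_res he hle).1

lemma d_res (he : IsId e) (hle : e ≤ d x) : d (res x e) = e := (res_le_and_d_res he hle).2

lemma res_eq_of_le {z : G} (h : z ≤ x) : res x (d z) = z :=
  (og3 x (d z) (isId_d z) (monotone_d h)).unique
    (res_le_and_d_res (isId_d z) (monotone_d h)) ⟨h, rfl⟩

lemma res_le_res (hf : IsId f) (he : IsId e) (hfe : f ≤ e) (hle : e ≤ d x) :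
    res x f ≤ res x e := by
  set z := res (res x e) f
  have hf' : f ≤ d (res x e) := by rwa [d_res he hle]
  have hz : z ≤ res x e := res_le hf hf'
  calc res x f = z := by rw [← d_res hf hf', res_eq_of_le (hz.trans (res_le he hle))]
    _ ≤ res x e := hz

lemma cores_le (he : IsId e) (hle : e ≤ r y) : cores e y ≤ y :=
  (monotone_inv (res_le he ((d_inv y).symm ▸ hle))).trans_eq (Groupoid'.inv_inv y)

lemma r_cores (he : IsId e) (hle : e ≤ r y) : r (cores e y) = e := by
  rw [cores, r_inv, d_res he ((d_inv y).symm ▸ hle)]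

lemma cores_eq_of_le {w : G} (h : w ≤ y) : cores (r w) y = w := by
  rw [cores, ← d_inv, res_eq_of_le (monotone_inv h), Groupoid'.inv_inv]

lemma cores_le_cores (hf : IsId f) (he : IsId e) (hfe : f ≤ e) (hle : e ≤ r y) :
    cores f y ≤ cores e y :=
  monotone_inv (res_le_res hf he hfe ((d_inv y).symm ▸ hle))

end Restriction

section Pseudoproduct

variable {x y e : G}

lemma res_cores_mem_composableBelow (he : e ∈ idsBelow x y) :
    (res x e, cores e y) ∈ composableBelow x y :=
  ⟨by rw [d_res he.1 he.2.1, r_cores he.1 he.2.2], res_le he.1 he.2.1, cores_le he.1 he.2.2⟩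

lemma d_fst_mem_idsBelow {q : G × G} (hq : q ∈ composableBelow x y) :
    d q.1 ∈ idsBelow x y :=
  ⟨isId_d _, monotone_d hq.2.1, hq.1 ▸ monotone_r hq.2.2⟩

lemma isGreatest_res_cores (he : IsGreatest (idsBelow x y) e) :
    IsGreatest (composableBelow x y) (res x e, cores e y) := by
  refine ⟨res_cores_mem_composableBelow he.1, fun q hq => ?_⟩
  have hf := d_fst_mem_idsBelow hq
  have hfe : d q.1 ≤ e := he.2 hf
  constructor
  · calc q.1 = res x (d q.1) := (res_eq_of_le hq.2.1).symm
      _ ≤ res x e := res_le_res hf.1 he.1.1 hfe he.1.2.1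
  · calc q.2 = cores (d q.1) y := by rw [hq.1, cores_eq_of_le hq.2.2]
      _ ≤ cores e y := cores_le_cores hf.1 he.1.1 hfe he.1.2.2

lemma isGreatest_d_fst {p : G × G} (hp : IsGreatest (composableBelow x y) p) :
    IsGreatest (idsBelow x y) (d p.1) := by
  refine ⟨d_fst_mem_idsBelow hp.1, fun f hf => ?_⟩
  calc f = d (res x f) := (d_res hf.1 hf.2.1).symm
    _ ≤ d p.1 := monotone_d (hp.2 (res_cores_mem_composableBelow hf)).1

end Pseudoproduct

end OrderedGroupoid

open OrderedGroupoid in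
theorem stmt14 {G : Type*} [Groupoid' G] [PartialOrder G] [OrderedGroupoid G] (x y : G) :
    ((∃ e : G, IsId e ∧ e ≤ d x ∧ e ≤ r y ∧
        ∀ f : G, IsId f → f ≤ d x → f ≤ r y → f ≤ e) ↔
      (∃ p : G × G, (d p.1 = r p.2 ∧ p.1 ≤ x ∧ p.2 ≤ y) ∧
        ∀ q : G × G, (d q.1 = r q.2 ∧ q.1 ≤ x ∧ q.2 ≤ y) → q.1 ≤ p.1 ∧ q.2 ≤ p.2)) ∧
    ∀ (e : G) (p : G × G),
      (IsId e ∧ e ≤ d x ∧ e ≤ r y ∧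
        ∀ f : G, IsId f → f ≤ d x → f ≤ r y → f ≤ e) →
      ((d p.1 = r p.2 ∧ p.1 ≤ x ∧ p.2 ≤ y) ∧
        ∀ q : G × G, (d q.1 = r q.2 ∧ q.1 ≤ x ∧ q.2 ≤ y) → q.1 ≤ p.1 ∧ q.2 ≤ p.2) →
      mul (res x e) (cores e y) = mul p.1 p.2 := by
  simp only [← isGreatest_idsBelow_iff]
  refine ⟨⟨fun ⟨e, he⟩ => ⟨_, isGreatest_res_cores he⟩,
    fun ⟨p, hp⟩ => ⟨_, isGreatest_d_fst hp⟩⟩, fun e p he hp => ?_⟩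
  rw [← (isGreatest_res_cores he).unique hp]
end
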